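/- For μ̃ ∈ (0,1) and 0 < t < 1 - μ̃, the Kullback–Leibler-type bound holds: (μ̃/(μ̃+t))^{μ̃+t} · ((1-μ̃)/(1-μ̃-t))^{1-μ̃-t} ≤ e^{-2t²}. -/

import Mathlib

/-!
The left-hand side is `exp (-KL(Ber(μ + t) ‖ Ber(μ)))`, so the bound is Pinsker's inequality for
Bernoulli distributions. For fixed `q ∈ (0, 1)` the function `p ↦ KL(p ‖ q) - 2 (p - q)²` is
convex on `[0, 1]`, its second derivative being `1 / (p (1 - p)) - 4 ≥ 0`, and it has a critical
point at `p = q`, where it vanishes; hence it is nonnegative.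
-/

open Real Set

noncomputable def binaryKL (p q : ℝ) : ℝ :=
  p * log (p / q) + (1 - p) * log ((1 - p) / (1 - q))

section Pinsker

variable {p q : ℝ}

lemma hasDerivAt_log_div_const (hp : 0 < p) (hq : 0 < q) :
    HasDerivAt (fun p => log (p / q)) (1 / p) p := by
  convert ((hasDerivAt_id' p).div_const q).log (by positivity) using 1
  field_simp

lemma hasDerivAt_log_one_sub_div_const (hp : p < 1) (hq : q < 1) :
    HasDerivAt (fun p => log ((1 - p) / (1 - q))) (-(1 / (1 - p))) p := by
  have : (1 - p) / (1 - q) ≠ 0 := div_ne_zero (by linarith) (by linarith)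
  convert (((hasDerivAt_id' p).const_sub 1).div_const (1 - q)).log this using 1
  have : 1 - p ≠ 0 := by linarith
  have : 1 - q ≠ 0 := by linarith
  field_simp

lemma hasDerivAt_binaryKL_left (hp0 : 0 < p) (hp1 : p < 1) (hq0 : 0 < q) (hq1 : q < 1) :
    HasDerivAt (fun p => binaryKL p q) (log (p / q) - log ((1 - p) / (1 - q))) p := by
  refine (((hasDerivAt_id' p).fun_mul (hasDerivAt_log_div_const hp0 hq0)).fun_add
    (((hasDerivAt_id' p).const_sub 1).fun_mul
      (hasDerivAt_log_one_sub_div_const hp1 hq1))).congr_deriv ?_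
  have : 1 - p ≠ 0 := by linarith
  field_simp
  ring

lemma hasDerivAt_log_div_sub_log_div (hp0 : 0 < p) (hp1 : p < 1) (hq0 : 0 < q) (hq1 : q < 1) :
    HasDerivAt (fun p => log (p / q) - log ((1 - p) / (1 - q))) (1 / p + 1 / (1 - p)) p := by
  refine ((hasDerivAt_log_div_const hp0 hq0).fun_sub
    (hasDerivAt_log_one_sub_div_const hp1 hq1)).congr_deriv ?_
  ring

lemma four_le_inv_add_inv_one_sub (hp0 : 0 < p) (hp1 : p < 1) : 4 ≤ 1 / p + 1 / (1 - p) := by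
  rw [div_add_div _ _ hp0.ne' (by linarith), le_div_iff₀ (by nlinarith)]
  nlinarith [sq_nonneg (2 * p - 1)]

lemma binaryKL_self (hq0 : 0 < q) (hq1 : q < 1) : binaryKL q q = 0 := by
  simp [binaryKL, div_self hq0.ne', div_self (sub_ne_zero.2 hq1.ne')]

lemma continuousOn_binaryKL_left (hq0 : 0 < q) (hq1 : q < 1) :
    ContinuousOn (fun p => binaryKL p q) (Icc 0 1) := by
  have h : ∀ r : ℝ, r ≠ 0 → Continuous fun p => p * log (p / r) := fun r hr => by
    have : (fun p => p * log (p / r)) = fun p => r * ((p / r) * log (p / r)) := by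
      funext p; field_simp
    rw [this]
    exact continuous_const.mul (continuous_mul_log.comp (continuous_id.div_const r))
  exact ((h q hq0.ne').add ((h (1 - q) (by linarith)).comp
    (continuous_const.sub continuous_id))).continuousOn

lemma hasDerivAt_binaryKL_sub_sq (hp0 : 0 < p) (hp1 : p < 1) (hq0 : 0 < q) (hq1 : q < 1) :
    HasDerivAt (fun p => binaryKL p q - 2 * (p - q) ^ 2)
      (log (p / q) - log ((1 - p) / (1 - q)) - 4 * (p - q)) p := by
  refine ((hasDerivAt_binaryKL_left hp0 hp1 hq0 hq1).fun_sub
    ((((hasDerivAt_id' p).sub_const q).pow 2).const_mul 2)).congr_deriv ?_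
  ring

lemma convexOn_binaryKL_sub_sq (hq0 : 0 < q) (hq1 : q < 1) :
    ConvexOn ℝ (Icc 0 1) (fun p => binaryKL p q - 2 * (p - q) ^ 2) := by
  refine convexOn_of_hasDerivWithinAt2_nonneg (convex_Icc 0 1)
    (f' := fun p => log (p / q) - log ((1 - p) / (1 - q)) - 4 * (p - q))
    (f'' := fun p => 1 / p + 1 / (1 - p) - 4)
    ((continuousOn_binaryKL_left hq0 hq1).sub (by fun_prop)) ?_ ?_ ?_ <;>
  rw [interior_Icc] <;> rintro p ⟨hp0, hp1⟩
  · exact (hasDerivAt_binaryKL_sub_sq hp0 hp1 hq0 hq1).hasDerivWithinAt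
  · exact ((hasDerivAt_log_div_sub_log_div hp0 hp1 hq0 hq1).fun_sub
      (((hasDerivAt_id' p).sub_const q).const_mul 4)).hasDerivWithinAt.congr_deriv (by ring)
  · linarith [four_le_inv_add_inv_one_sub hp0 hp1]

theorem two_mul_sq_sub_le_binaryKL (hp : p ∈ Icc 0 1) (hq0 : 0 < q) (hq1 : q < 1) :
    2 * (p - q) ^ 2 ≤ binaryKL p q := by
  have hderiv := (hasDerivAt_binaryKL_sub_sq hq0 hq1 hq0 hq1).hasDerivWithinAt (s := Ioi q)
  have hmin := (convexOn_binaryKL_sub_sq hq0 hq1).isMinOn_of_rightDeriv_eq_zero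
    (x := q) (by rw [interior_Icc]; exact ⟨hq0, hq1⟩) ?_ hp
  · simpa [binaryKL_self hq0 hq1] using hmin
  · rw [hderiv.derivWithin (uniqueDiffWithinAt_Ioi q)]
    simp

lemma rpow_mul_rpow_eq_exp_neg_binaryKL (hp0 : 0 < p) (hp1 : p < 1) (hq0 : 0 < q)
    (hq1 : q < 1) :
    (q / p) ^ p * ((1 - q) / (1 - p)) ^ (1 - p) = exp (-binaryKL p q) := by
  have h1p : 0 < 1 - p := by linarith
  have h1q : 0 < 1 - q := by linarith
  rw [rpow_def_of_pos (by positivity), rpow_def_of_pos (by positivity), ← exp_add, binaryKL,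
    log_div hq0.ne' hp0.ne', log_div h1q.ne' h1p.ne', log_div hp0.ne' hq0.ne',
    log_div h1p.ne' h1q.ne']
  ring_nf

end Pinsker

/-- The Kullback–Leibler-type bound:
`(μ̃/(μ̃+t))^{μ̃+t} ((1-μ̃)/(1-μ̃-t))^{1-μ̃-t} ≤ e^{-2t²}`. -/
theorem kl_type_bound (μ t : ℝ) (hμ0 : 0 < μ) (hμ1 : μ < 1)
    (ht0 : 0 < t) (ht1 : t < 1 - μ) :
    (μ / (μ + t)) ^ (μ + t) * ((1 - μ) / (1 - μ - t)) ^ (1 - μ - t) ≤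
      exp (-2 * t ^ 2) := by
  have hp0 : 0 < μ + t := by linarith
  have hp1 : μ + t < 1 := by linarith
  have hpinsker := two_mul_sq_sub_le_binaryKL ⟨hp0.le, hp1.le⟩ hμ0 hμ1
  rw [add_sub_cancel_left] at hpinsker
  rw [sub_sub, rpow_mul_rpow_eq_exp_neg_binaryKL hp0 hp1 hμ0 hμ1, exp_le_exp]
  linarith
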